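/- Let n ≥ k ≥ d ≥ 1 be integers. Then C(n, d) ≤ k^d · C(n, k)^(d/k). -/
import Mathlib

lemma nat_pow_mul_fact_le (n k : ℕ) (hn : k ≤ n) :
    n ^ k * k.factorial ≤ k ^ k * n.descFactorial k := by
  have key : ∏ i ∈ Finset.range k, (n * (k - i)) ≤ ∏ i ∈ Finset.range k, (k * (n - i)) := by
    apply Finset.prod_le_prod'
    intro i hi
    simp only [Finset.mem_range] at hi
    have h1 : i ≤ k := hi.le
    have h2 : i ≤ n := h1.trans hn
    zify [h1, h2]
    nlinarith [Nat.mul_le_mul_right i hn]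
  rw [← Nat.descFactorial_self, Nat.descFactorial_eq_prod_range,
    Nat.descFactorial_eq_prod_range]
  simpa [Finset.prod_mul_distrib, Finset.card_range] using key

theorem choose_le_pow_mul_rpow (n k d : ℕ) (hd : 1 ≤ d) (hk : d ≤ k) (hn : k ≤ n) :
    (n.choose d : ℝ) ≤ (k : ℝ) ^ d * (n.choose k : ℝ) ^ ((d : ℝ) / (k : ℝ)) := by
  have hk0 : 0 < k := lt_of_lt_of_le hd hk
  have hkR : (0 : ℝ) < (k : ℝ) := by exact_mod_cast hk0
  set x : ℝ := (n : ℝ) / (k : ℝ) with hx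
  have hx0 : 0 ≤ x := div_nonneg (Nat.cast_nonneg n) hkR.le
  -- x^k ≤ choose n k
  have hnat : n ^ k ≤ k ^ k * n.choose k := by
    have h := nat_pow_mul_fact_le n k hn
    rw [Nat.descFactorial_eq_factorial_mul_choose] at h
    have hf : 0 < k.factorial := Nat.factorial_pos k
    calc n ^ k = n ^ k * k.factorial / k.factorial := by
          rw [Nat.mul_div_cancel _ hf]
      _ ≤ k ^ k * (k.factorial * n.choose k) / k.factorial := Nat.div_le_div_right h
      _ = k ^ k * n.choose k := by
          rw [show k ^ k * (k.factorial * n.choose k) = k ^ k * n.choose k * k.factorial by ring,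
            Nat.mul_div_cancel _ hf]
  have hxk : x ^ k ≤ (n.choose k : ℝ) := by
    rw [hx, div_pow, div_le_iff₀ (by positivity)]
    have : ((n:ℝ))^k ≤ ((k:ℝ))^k * (n.choose k : ℝ) := by exact_mod_cast hnat
    linarith
  have hdk : (0:ℝ) ≤ (d : ℝ) / (k : ℝ) := by positivity
  have step1 : (n.choose d : ℝ) ≤ (n : ℝ) ^ d := by
    exact_mod_cast Nat.choose_le_pow n d
  have step2 : (n : ℝ) ^ d = (k : ℝ) ^ d * x ^ d := by
    rw [hx, div_pow, mul_div_cancel₀]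
    positivity
  have step3 : x ^ d = (x ^ k) ^ ((d : ℝ) / (k : ℝ)) := by
    rw [← Real.rpow_natCast x k, ← Real.rpow_mul hx0, ← Real.rpow_natCast x d]
    congr 1
    field_simp
  have step4 : (x ^ k) ^ ((d : ℝ) / (k : ℝ)) ≤ (n.choose k : ℝ) ^ ((d : ℝ) / (k : ℝ)) :=
    Real.rpow_le_rpow (by positivity) hxk hdk
  calc (n.choose d : ℝ) ≤ (n : ℝ) ^ d := step1
    _ = (k : ℝ) ^ d * x ^ d := step2
    _ = (k : ℝ) ^ d * (x ^ k) ^ ((d : ℝ) / (k : ℝ)) := by rw [step3]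
    _ ≤ (k : ℝ) ^ d * (n.choose k : ℝ) ^ ((d : ℝ) / (k : ℝ)) := by
        exact mul_le_mul_of_nonneg_left step4 (by positivity)
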